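/- Let R be a commutative ring with unit, b ∈ R, and m a positive integer. Let T_{b+1,b} be the symmetric Toeplitz matrix of order 2m whose diagonal entries are zero, whose entries on the subdiagonal and superdiagonal equal b+1, and all of whose other off-diagonal entries equal b. Then Hf(T_{b+1,b}) = y_m(b), the value at b of the Bessel polynomial of degree m. -/

import Mathlib

/-- The hafnian of a matrix over a linearly ordered finite index type:
the sum over all fixed-point-free involutions `σ` of the product of the
entries `A i (σ i)`, taken over one representative `i < σ i` of each orbit. -/
def hafnian {ι : Type*} [Fintype ι] [LinearOrder ι] {R : Type*} [CommSemiring R]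
    (A : Matrix ι ι R) : R :=
  ∑ σ ∈ Finset.univ.filter
      (fun σ : Equiv.Perm ι => σ * σ = 1 ∧ ∀ i, σ i ≠ i),
    ∏ i ∈ Finset.univ.filter (fun i => i < σ i), A i (σ i)

/-- The Toeplitz matrix `T_{a,b}` of order `n`: zero diagonal, entries `a` on the
sub- and superdiagonal, and entries `b` elsewhere. -/
def toeplitzAB {R : Type*} (n : ℕ) (a b : R) [Zero R] : Matrix (Fin n) (Fin n) R :=
  fun i j =>
    if i = j then 0
    else if (i : ℕ) + 1 = (j : ℕ) ∨ (j : ℕ) + 1 = (i : ℕ) then a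
    else b

/-- The Bessel polynomial of degree `m` evaluated at `b` in a commutative ring:
`y_m(b) = Σ_{k=0}^{m} ((m+k)!/(k!·(m-k)!·2^k)) · b^k`, the coefficients being the
integers `(m+k)!/(k!·(m-k)!·2^k)`. -/
def besselPoly {R : Type*} [CommSemiring R] (m : ℕ) (b : R) : R :=
  ∑ k ∈ Finset.range (m + 1),
    ((Nat.factorial (m + k) /
      (Nat.factorial k * Nat.factorial (m - k) * 2 ^ k) : ℕ) : R) * b ^ k

/-!
Off the diagonal, `T_{b+1,b} = b + e` with `e` the adjacency matrix of the path on `2m` vertices.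
Expanding `∏ (b + e)` over the edges of a perfect matching, each term is a matching of the path
with `j` edges (where `e` was chosen) together with a perfect matching of the `2(m - j)` remaining
vertices, of which there are `(2(m - j) - 1)‼`, each contributing `b ^ (m - j)`. Since a path on
`n` vertices has `(n - j).choose j` matchings with `j` edges,
`Hf = ∑ⱼ (2m - j).choose j * (2(m - j) - 1)‼ * b ^ (m - j)`, and putting `j = m - k` gives the
Bessel coefficients `(m + k).choose (m - k) * (2k - 1)‼ = (m + k)! / (k! (m - k)! 2ᵏ)`.
Both counts come from expanding along the least vertex.
-/

open Finset Equiv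
open scoped Nat

namespace Equiv.Perm

variable {ι : Type*} {π : Perm ι}

lemma apply_apply_of_mul_self_eq_one (h : π * π = 1) (i : ι) : π (π i) = i := by
  simpa using DFunLike.congr_fun h i

lemma mul_swap_mul_self_eq_mul_self [DecidableEq ι] {a x : ι}
    (h : swap (π a) (π x) = swap a x) : π * swap a x * (π * swap a x) = π * π := by
  have hc : Commute (swap a x) π := by
    rw [commute_iff_eq, mul_swap_eq_swap_mul, h]
  rw [hc.mul_mul_mul_comm, swap_mul_self, mul_one]

lemma forall_mul_swap_apply_ne_iff {s : Finset ι} {a x : ι} [DecidableEq ι] (hax : a ≠ x)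
    (hπa : π a = a) (hπx : π x = x) :
    (∀ i ∈ s, (π * swap a x) i ≠ i) ↔ ∀ i ∈ (s.erase a).erase x, π i ≠ i := by
  constructor
  · intro h i hi
    obtain ⟨hix, hia, his⟩ := by simpa using hi
    simpa [Perm.mul_apply, swap_apply_of_ne_of_ne hia hix] using h i his
  · intro h i hi
    by_cases hia : i = a
    · simpa [hia, Perm.mul_apply, hπx] using hax.symm
    by_cases hix : i = x
    · simpa [hix, Perm.mul_apply, hπa] using hax
    · simpa [Perm.mul_apply, swap_apply_of_ne_of_ne hia hix] using h i (by simp [*])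

end Equiv.Perm

open Equiv.Perm

section Matchings

variable {ι : Type*} [Fintype ι] [LinearOrder ι] {R : Type*} [CommSemiring R]

/-- As in `hafnian`, a matching of `s` is encoded by an involution fixing every point outside `s`;
its edges are the orbits `{i, π i}`, each represented by its left end `i < π i`. -/
def matchingsOn (s : Finset ι) : Finset (Perm ι) :=
  univ.filter fun π => π * π = 1 ∧ ∀ i ∉ s, π i = i

def perfectMatchingsOn (s : Finset ι) : Finset (Perm ι) :=
  (matchingsOn s).filter fun π => ∀ i ∈ s, π i ≠ i

def leftEnds (π : Perm ι) : Finset ι := univ.filter fun i => i < π i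

def matchingWeight (e : Matrix ι ι R) (π : Perm ι) : R := ∏ i ∈ leftEnds π, e i (π i)

def hafnianOn (A : Matrix ι ι R) (s : Finset ι) : R :=
  ∑ σ ∈ perfectMatchingsOn s, matchingWeight A σ

def matchingSum (e : Matrix ι ι R) (w : ℕ → R) (s : Finset ι) : R :=
  ∑ π ∈ matchingsOn s, matchingWeight e π * w #(leftEnds π)

variable {s t : Finset ι} {π τ : Perm ι} {a x : ι}

lemma mem_matchingsOn : π ∈ matchingsOn s ↔ π * π = 1 ∧ ∀ i ∉ s, π i = i := by
  simp [matchingsOn]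

lemma mem_leftEnds {i : ι} : i ∈ leftEnds π ↔ i < π i := by
  simp [leftEnds]

lemma matchingsOn_empty : matchingsOn (∅ : Finset ι) = {1} := by
  ext π
  simp only [mem_matchingsOn, notMem_empty, not_false_eq_true, forall_const, mem_singleton]
  constructor
  · rintro ⟨-, h⟩
    exact Equiv.ext h
  · rintro rfl
    simp

lemma leftEnds_one : leftEnds (1 : Perm ι) = ∅ := by
  simp [leftEnds]

lemma matchingSum_empty (e : Matrix ι ι R) (w : ℕ → R) : matchingSum e w ∅ = w 0 := by
  simp [matchingSum, matchingsOn_empty, matchingWeight, leftEnds_one]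

lemma hafnianOn_congr {A B : Matrix ι ι R} (h : ∀ i j, i < j → A i j = B i j) (s : Finset ι) :
    hafnianOn A s = hafnianOn B s :=
  sum_congr rfl fun σ _ => prod_congr rfl fun i hi => h i (σ i) (mem_leftEnds.mp hi)

lemma hafnian_eq_hafnianOn_univ (A : Matrix ι ι R) : hafnian A = hafnianOn A univ := by
  simp only [hafnian, hafnianOn, perfectMatchingsOn, matchingsOn, filter_filter, mem_univ,
    not_true_eq_false, false_implies, implies_true, and_true, forall_const]
  rfl

lemma filter_matchingsOn_apply_eq :
    (matchingsOn s).filter (fun π => π a = a) = matchingsOn (s.erase a) := by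
  ext π
  simp only [mem_filter, mem_matchingsOn, mem_erase, not_and_or, not_not]
  constructor
  · rintro ⟨⟨hπ, hs⟩, ha⟩
    refine ⟨hπ, fun i hi => ?_⟩
    rcases hi with rfl | hi
    exacts [ha, hs i hi]
  · rintro ⟨hπ, hs⟩
    exact ⟨⟨hπ, fun i hi => hs i (Or.inr hi)⟩, hs a (Or.inl rfl)⟩

lemma mul_swap_apply_mem_matchingsOn (hπ : π ∈ matchingsOn s) :
    π * swap a (π a) ∈ matchingsOn ((s.erase a).erase (π a)) := by
  obtain ⟨hπ, hs⟩ := mem_matchingsOn.mp hπ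
  have hπx : π (π a) = a := apply_apply_of_mul_self_eq_one hπ a
  refine mem_matchingsOn.mpr ⟨?_, fun i hi => ?_⟩
  · rw [mul_swap_mul_self_eq_mul_self (by rw [hπx, swap_comm]), hπ]
  · simp only [mem_erase, not_and_or, not_not, ne_eq] at hi
    by_cases hia : i = a
    · simp [hia, hπx]
    by_cases hix : i = π a
    · simp [hix]
    · have hi : i ∉ s := by tauto
      simp [Perm.mul_apply, swap_apply_of_ne_of_ne hia hix, hs i hi]

lemma mul_swap_mem_matchingsOn (ha : a ∈ s) (hx : x ∈ s)
    (hτ : τ ∈ matchingsOn ((s.erase a).erase x)) : τ * swap a x ∈ matchingsOn s := by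
  obtain ⟨hτ, hs⟩ := mem_matchingsOn.mp hτ
  have hτa : τ a = a := hs a (by simp)
  have hτx : τ x = x := hs x (by simp)
  refine mem_matchingsOn.mpr ⟨?_, fun i hi => ?_⟩
  · rw [mul_swap_mul_self_eq_mul_self (by rw [hτa, hτx]), hτ]
  · have hia : i ≠ a := by rintro rfl; exact hi ha
    have hix : i ≠ x := by rintro rfl; exact hi hx
    simp [Perm.mul_apply, swap_apply_of_ne_of_ne hia hix, hs i (by simp [hi])]

/-- Removing the edge at `a` identifies the matchings of `s` that move `a` with the pairs
consisting of a partner `x` of `a` and a matching of `s \ {a, x}`. -/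
lemma sum_filter_matchingsOn_apply_ne {M : Type*} [AddCommMonoid M] (ha : a ∈ s)
    (f : Perm ι → M) :
    ∑ π ∈ (matchingsOn s).filter (fun π => π a ≠ a), f π
      = ∑ x ∈ s.erase a, ∑ τ ∈ matchingsOn ((s.erase a).erase x), f (τ * swap a x) := by
  rw [sum_sigma']
  refine sum_nbij' (fun π => ⟨π a, π * swap a (π a)⟩) (fun p => p.2 * swap a p.1)
    ?_ ?_ ?_ ?_ (fun π _ => by simp)
  · intro π hπ
    simp only [mem_filter] at hπ
    obtain ⟨hπ, hπa⟩ := hπ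
    have hπas : π a ∈ s := by
      by_contra h
      exact hπa (by simpa [apply_apply_of_mul_self_eq_one (mem_matchingsOn.mp hπ).1] using
        ((mem_matchingsOn.mp hπ).2 _ h).symm)
    simp only [mem_sigma, mem_erase]
    exact ⟨⟨hπa, hπas⟩, mul_swap_apply_mem_matchingsOn hπ⟩
  · rintro ⟨x, τ⟩ h
    simp only [mem_sigma, mem_erase] at h
    obtain ⟨⟨hxa, hx⟩, hτ⟩ := h
    have hτx : τ x = x := (mem_matchingsOn.mp hτ).2 x (by simp)
    simp only [mem_filter]
    exact ⟨mul_swap_mem_matchingsOn ha hx hτ, by simpa [Perm.mul_apply, hτx] using hxa⟩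
  · intro π _
    simp [mul_assoc]
  · rintro ⟨x, τ⟩ h
    simp only [mem_sigma, mem_erase] at h
    have hτx : τ x = x := (mem_matchingsOn.mp h.2).2 x (by simp)
    have hax : (τ * swap a x) a = x := by simp [Perm.mul_apply, hτx]
    simp [hax, mul_assoc]

lemma sum_sum_matchingsOn_erase {M : Type*} [AddCommMonoid M] (f : Perm ι → M) :
    ∑ x ∈ t, ∑ π ∈ matchingsOn (t.erase x), f π
      = ∑ π ∈ matchingsOn t, #(t.filter fun x => π x = x) • f π := by
  simp_rw [← filter_matchingsOn_apply_eq, sum_filter]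
  rw [sum_comm]
  refine sum_congr rfl fun π _ => ?_
  rw [← sum_filter, sum_const]

lemma card_filter_apply_ne (hπ : π ∈ matchingsOn t) :
    #(t.filter fun i => π i ≠ i) = 2 * #(leftEnds π) := by
  obtain ⟨hπ, hs⟩ := mem_matchingsOn.mp hπ
  have hinv := apply_apply_of_mul_self_eq_one hπ
  have hmoved : t.filter (fun i => π i ≠ i) = leftEnds π ∪ (leftEnds π).image π := by
    ext i
    simp only [mem_filter, mem_union, mem_image, mem_leftEnds]
    constructor
    · rintro ⟨-, hi⟩
      rcases hi.lt_or_gt with hi | hi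
      · exact Or.inr ⟨π i, by rwa [hinv], hinv i⟩
      · exact Or.inl hi
    · rintro (hi | ⟨j, hj, rfl⟩)
      · exact ⟨by_contra fun h => hi.ne' (hs i h), hi.ne'⟩
      · have hj' : π (π j) < π j := by rwa [hinv]
        exact ⟨by_contra fun h => hj'.ne (hs _ h), hj'.ne⟩
  have hdisj : Disjoint (leftEnds π) ((leftEnds π).image π) := by
    rw [disjoint_left]
    rintro i hi hi'
    obtain ⟨j, hj, rfl⟩ := mem_image.mp hi'
    simp only [mem_leftEnds, hinv] at hi hj
    exact lt_asymm hi hj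
  rw [hmoved, card_union_of_disjoint hdisj, card_image_of_injective _ π.injective, two_mul]

lemma leftEnds_mul_swap (hax : a < x) (hτa : τ a = a) (hτx : τ x = x) :
    leftEnds (τ * swap a x) = insert a (leftEnds τ) := by
  ext i
  rw [mem_insert, mem_leftEnds, mem_leftEnds, Perm.mul_apply, swap_apply_def]
  by_cases hia : i = a
  · simp [hia, hτx, hax]
  by_cases hix : i = x
  · simp [hix, hτa, hτx, hax.ne', hax.not_gt]
  · simp [hia, hix]

lemma matchingWeight_mul_swap (e : Matrix ι ι R) (hax : a < x) (hτa : τ a = a)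
    (hτx : τ x = x) :
    matchingWeight e (τ * swap a x) = e a x * matchingWeight e τ := by
  rw [matchingWeight, leftEnds_mul_swap hax hτa hτx, prod_insert (by simp [mem_leftEnds, hτa])]
  congr 1
  · simp [Perm.mul_apply, hτx]
  · refine prod_congr rfl fun i hi => ?_
    have hia : i ≠ a := by rintro rfl; simp [mem_leftEnds, hτa] at hi
    have hix : i ≠ x := by rintro rfl; simp [mem_leftEnds, hτx] at hi
    rw [Perm.mul_apply, swap_apply_of_ne_of_ne hia hix]

lemma hafnianOn_eq_sum_mul (A : Matrix ι ι R) (ha : a ∈ s) (hmin : ∀ x ∈ s, a ≤ x) :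
    hafnianOn A s = ∑ x ∈ s.erase a, A a x * hafnianOn A ((s.erase a).erase x) := by
  have hperf : perfectMatchingsOn s
      = ((matchingsOn s).filter (fun π => π a ≠ a)).filter (fun π => ∀ i ∈ s, π i ≠ i) := by
    ext π
    simp only [perfectMatchingsOn, mem_filter]
    exact ⟨fun h => ⟨⟨h.1, h.2 a ha⟩, h.2⟩, fun h => ⟨h.1.1, h.2⟩⟩
  rw [hafnianOn, hperf, sum_filter, sum_filter_matchingsOn_apply_ne ha]
  refine sum_congr rfl fun x hx => ?_
  obtain ⟨hxa, hxs⟩ := mem_erase.mp hx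
  have hax : a < x := (hmin x hxs).lt_of_ne' hxa
  rw [hafnianOn, perfectMatchingsOn, sum_filter, mul_sum]
  refine sum_congr rfl fun τ hτ => ?_
  have hτa : τ a = a := (mem_matchingsOn.mp hτ).2 a (by simp)
  have hτx : τ x = x := (mem_matchingsOn.mp hτ).2 x (by simp)
  simp only [forall_mul_swap_apply_ne_iff hax.ne hτa hτx, matchingWeight_mul_swap A hax hτa hτx,
    mul_ite, mul_zero]

lemma matchingSum_eq_add_sum (e : Matrix ι ι R) (w : ℕ → R) (ha : a ∈ s)
    (hmin : ∀ x ∈ s, a ≤ x) :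
    matchingSum e w s = matchingSum e w (s.erase a)
      + ∑ x ∈ s.erase a, e a x * matchingSum e (fun j => w (j + 1)) ((s.erase a).erase x) := by
  rw [matchingSum, ← sum_filter_add_sum_filter_not _ (fun π => π a = a),
    filter_matchingsOn_apply_eq]
  congr 1
  refine (sum_filter_matchingsOn_apply_ne ha _).trans (sum_congr rfl fun x hx => ?_)
  obtain ⟨hxa, hxs⟩ := mem_erase.mp hx
  have hax : a < x := (hmin x hxs).lt_of_ne' hxa
  rw [matchingSum, mul_sum]
  refine sum_congr rfl fun τ hτ => ?_
  have hτa : τ a = a := (mem_matchingsOn.mp hτ).2 a (by simp)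
  have hτx : τ x = x := (mem_matchingsOn.mp hτ).2 x (by simp)
  rw [matchingWeight_mul_swap e hax hτa hτx, leftEnds_mul_swap hax hτa hτx,
    card_insert_of_notMem (by simp [mem_leftEnds, hτa]), mul_assoc]

lemma card_filter_apply_eq (hπ : π ∈ matchingsOn t) {r : ℕ} (ht : #t = 2 * r + 1) :
    #(leftEnds π) ≤ r ∧ #(t.filter fun x => π x = x) = 2 * (r - #(leftEnds π)) + 1 := by
  have h := card_filter_add_card_filter_not (s := t) (fun x => π x = x)
  rw [card_filter_apply_ne hπ, ht] at h
  omega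

lemma hafnianOn_const_add (b : R) (e : Matrix ι ι R) (r : ℕ) {s : Finset ι} (hs : #s = 2 * r) :
    hafnianOn (Matrix.of fun i j => b + e i j) s
      = matchingSum e (fun j => ((2 * (r - j) - 1)‼ : R) * b ^ (r - j)) s := by
  induction r generalizing s with
  | zero =>
    obtain rfl : s = ∅ := card_eq_zero.mp hs
    simp [hafnianOn, perfectMatchingsOn, matchingsOn_empty, matchingWeight, leftEnds_one,
      matchingSum_empty]
  | succ r ih =>
    have hne : s.Nonempty := card_pos.mp (by omega)
    set a := s.min' hne
    have ha : a ∈ s := s.min'_mem hne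
    have hmin : ∀ x ∈ s, a ≤ x := fun x hx => s.min'_le x hx
    have hsa : #(s.erase a) = 2 * r + 1 := by rw [card_erase_of_mem ha, hs]; omega
    have hsax : ∀ x ∈ s.erase a, #((s.erase a).erase x) = 2 * r := fun x hx => by
      rw [card_erase_of_mem hx, hsa]; omega
    rw [hafnianOn_eq_sum_mul _ ha hmin, matchingSum_eq_add_sum e _ ha hmin]
    simp_rw [Matrix.of_apply, add_mul, sum_add_distrib]
    congr 1
    · -- every matching of `s \ {a}` leaves `2 (r - j) + 1` points unmatched to pair with `a`
      rw [← mul_sum, sum_congr rfl fun x hx => ih (hsax x hx)]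
      simp only [matchingSum]
      rw [sum_sum_matchingsOn_erase, mul_sum]
      refine sum_congr rfl fun π hπ => ?_
      obtain ⟨hle, hfix⟩ := card_filter_apply_eq hπ hsa
      rw [hfix, nsmul_eq_mul, show r + 1 - #(leftEnds π) = r - #(leftEnds π) + 1 by omega,
        show 2 * (r - #(leftEnds π) + 1) - 1 = 2 * (r - #(leftEnds π)) + 1 by omega,
        Nat.doubleFactorial_add_one]
      push_cast
      ring
    · refine sum_congr rfl fun x hx => ?_
      rw [ih (hsax x hx)]
      congr 2
      funext j
      simp

end Matchings

section Path

open SimpleGraph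

variable {R : Type*} [CommSemiring R]

instance (N : ℕ) : DecidableRel (pathGraph N).Adj := fun _ _ =>
  decidable_of_iff _ pathGraph_adj.symm

lemma toeplitzAB_apply_of_ne {N : ℕ} (b : R) {i j : Fin N} (h : i ≠ j) :
    toeplitzAB N (b + 1) b i j = b + (pathGraph N).adjMatrix R i j := by
  simp only [toeplitzAB, if_neg h, adjMatrix_apply, pathGraph_adj]
  split_ifs <;> simp

lemma sum_range_choose_sub_mul_add_two (w : ℕ → R) (n : ℕ) :
    ∑ j ∈ range (n + 3), ((n + 2 - j).choose j : R) * w j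
      = ∑ j ∈ range (n + 2), ((n + 1 - j).choose j : R) * w j
        + ∑ j ∈ range (n + 1), ((n - j).choose j : R) * w (j + 1) := by
  rw [sum_range_succ' (fun j => ((n + 2 - j).choose j : R) * w j),
    sum_range_succ' (fun j => ((n + 1 - j).choose j : R) * w j), sum_range_succ _ (n + 1)]
  have hpascal : ∀ j ∈ range (n + 1), ((n + 2 - (j + 1)).choose (j + 1) : R) * w (j + 1)
      = ((n + 1 - (j + 1)).choose (j + 1) : R) * w (j + 1)
        + ((n - j).choose j : R) * w (j + 1) := by
    intro j hj
    rw [show n + 2 - (j + 1) = n - j + 1 by have := mem_range.mp hj; omega, Nat.choose_succ_succ',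
      show n + 1 - (j + 1) = n - j by omega]
    push_cast
    ring
  rw [sum_congr rfl hpascal, sum_add_distrib]
  simp only [Nat.choose_zero_right, Nat.sub_self, Nat.choose_zero_succ, Nat.cast_zero, zero_mul,
    add_zero]
  ring

lemma filter_le_val_erase {N k : ℕ} (hk : k < N) :
    (univ.filter fun i : Fin N => k ≤ (i : ℕ)).erase ⟨k, hk⟩
      = univ.filter fun i : Fin N => k + 1 ≤ (i : ℕ) := by
  ext i
  simp only [mem_erase, mem_filter, mem_univ, true_and, ne_eq, Fin.ext_iff]
  omega

/-- Matchings of a path on `n` vertices with `j` edges are counted by `(n - j).choose j`. -/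
lemma matchingSum_pathGraph {N : ℕ} (n : ℕ) (w : ℕ → R) (k : ℕ) (hN : k + n = N) :
    matchingSum ((pathGraph N).adjMatrix R) w (univ.filter fun i : Fin N => k ≤ (i : ℕ))
      = ∑ j ∈ range (n + 1), ((n - j).choose j : R) * w j := by
  induction n using Nat.strong_induction_on generalizing k w with
  | _ n ih =>
  rcases n with _ | n
  · have hs : (univ.filter fun i : Fin N => k ≤ (i : ℕ)) = ∅ := by
      ext i
      simp only [mem_filter, mem_univ, true_and, notMem_empty, iff_false, not_le]
      omega
    simp [hs, matchingSum_empty]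
  set a : Fin N := ⟨k, by omega⟩
  rw [matchingSum_eq_add_sum _ _ (a := a) (by simp [a]) (by simp [a, Fin.le_def]),
    filter_le_val_erase, ih n (by omega) _ _ (by omega)]
  rcases n with _ | n
  · have hs : (univ.filter fun i : Fin N => k + 1 ≤ (i : ℕ)) = ∅ := by
      ext i
      simp only [mem_filter, mem_univ, true_and, notMem_empty, iff_false, not_le]
      omega
    rw [hs]
    simp [sum_range_succ]
  set x : Fin N := ⟨k + 1, by omega⟩
  have hx : x ∈ univ.filter fun i : Fin N => k + 1 ≤ (i : ℕ) := by simp [x]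
  rw [sum_eq_single_of_mem x hx, filter_le_val_erase, ih n (by omega) _ _ (by omega),
    sum_range_choose_sub_mul_add_two]
  · simp [a, x, pathGraph_adj]
  · intro y hy hyx
    have : k + 2 ≤ (y : ℕ) := by
      simp only [mem_filter, mem_univ, true_and] at hy
      have : (y : ℕ) ≠ k + 1 := fun h => hyx (Fin.ext h)
      omega
    simp [a, pathGraph_adj]
    omega

end Path

section Bessel

variable {R : Type*} [CommSemiring R]

lemma Nat.factorial_two_mul_eq_mul_doubleFactorial (k : ℕ) :
    (2 * k)! = 2 ^ k * k ! * (2 * k - 1)‼ := by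
  rcases k with _ | k
  · rfl
  rw [show 2 * (k + 1) = 2 * k + 1 + 1 by ring, Nat.factorial_eq_mul_doubleFactorial,
    show 2 * k + 1 + 1 = 2 * (k + 1) by ring, Nat.doubleFactorial_two_mul,
    show 2 * (k + 1) - 1 = 2 * k + 1 by omega]

lemma Nat.factorial_add_div_eq_choose_mul_doubleFactorial {m k : ℕ} (hk : k ≤ m) :
    (m + k)! / (k ! * (m - k)! * 2 ^ k) = (m + k).choose (m - k) * (2 * k - 1)‼ := by
  apply Nat.div_eq_of_eq_mul_left (by positivity)
  have h := Nat.choose_mul_factorial_mul_factorial (show 2 * k ≤ m + k by omega)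
  rw [show m + k - 2 * k = m - k by omega, Nat.factorial_two_mul_eq_mul_doubleFactorial] at h
  rw [Nat.choose_symm_of_eq_add (show m + k = m - k + 2 * k by omega), ← h]
  ring

lemma sum_range_choose_mul_eq_besselPoly (m : ℕ) (b : R) :
    ∑ j ∈ range (2 * m + 1), ((2 * m - j).choose j : R) * ((2 * (m - j) - 1)‼ * b ^ (m - j))
      = besselPoly m b := by
  rw [show 2 * m + 1 = (m + 1) + m by ring, sum_range_add]
  have hlarge : ∀ i ∈ range m,
      ((2 * m - (m + 1 + i)).choose (m + 1 + i) : R) * ((2 * (m - (m + 1 + i)) - 1)‼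
        * b ^ (m - (m + 1 + i))) = 0 := fun i _ => by
    rw [Nat.choose_eq_zero_of_lt (by omega), Nat.cast_zero, zero_mul]
  rw [sum_eq_zero hlarge, add_zero, ← sum_range_reflect, besselPoly]
  refine sum_congr rfl fun k hk => ?_
  have hk : k ≤ m := Nat.lt_succ_iff.mp (mem_range.mp hk)
  rw [Nat.factorial_add_div_eq_choose_mul_doubleFactorial hk,
    show m + 1 - 1 - k = m - k by omega, show 2 * m - (m - k) = m + k by omega,
    show m - (m - k) = k by omega]
  push_cast
  ring

end Bessel

theorem hafnian_toeplitz_eq_bessel_general {R : Type*} [CommRing R] (m : ℕ) (b : R) :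
    hafnian (toeplitzAB (2 * m) (b + 1) b) = besselPoly m b := by
  calc hafnian (toeplitzAB (2 * m) (b + 1) b)
      = hafnianOn (Matrix.of fun i j => b + (SimpleGraph.pathGraph (2 * m)).adjMatrix R i j)
          univ := by
        rw [hafnian_eq_hafnianOn_univ]
        exact hafnianOn_congr (fun i j hij => toeplitzAB_apply_of_ne b hij.ne) univ
    _ = matchingSum ((SimpleGraph.pathGraph (2 * m)).adjMatrix R)
          (fun j => ((2 * (m - j) - 1)‼ : R) * b ^ (m - j)) univ :=
        hafnianOn_const_add b _ m (by simp)
    _ = besselPoly m b := by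
        rw [← sum_range_choose_mul_eq_besselPoly m b,
          ← matchingSum_pathGraph (2 * m) _ 0 (zero_add _)]
        simp

/-- For a commutative ring `R`, `b ∈ R` and `m ≥ 1`, the hafnian of the
`2m × 2m` Toeplitz matrix `T_{b+1,b}` equals the value `y_m(b)` of the Bessel
polynomial of degree `m` at `b`. -/
theorem hafnian_toeplitz_eq_bessel {R : Type*} [CommRing R] (m : ℕ) (hm : 0 < m) (b : R) :
    hafnian (toeplitzAB (2 * m) (b + 1) b) = besselPoly m b :=
  hafnian_toeplitz_eq_bessel_general m b
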